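/- Let m be a positive integer, ζ_m := e^{2πi/m}, and let z ∈ ℂ with 0 < |z| < 1 and z^m + z^{-m} ≠ 1. Define the finite-formula values G(z) := (1 − z^m − z^{-m})⁻¹ · ∑_{n=0}^{m-1} ζ_m^n (z; ζ_m)_n (z⁻¹ζ_m; ζ_m)_n (the value of g₃(z, ζ_m)) and, for each positive integer k, V_k(z) := (−1/(1 − z^m − z^{-m})) · ∑_{n=0}^{m-1} ζ_m^{k(n+1)} (zζ_m; ζ_m)_n (z⁻¹ζ_m; ζ_m)_n (the value of U_k(−z, ζ_m)). Then the series ∑_{k=1}^∞ V_k(z) z^k ζ_m^{-k} converges and G(z) = ((z−1)/z) · ∑_{k=1}^∞ V_k(z) z^k ζ_m^{-k}. -/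

import Mathlib

/-!
Writing `w_n = ζ^n z`, each `V_k z^k ζ^{-k}` is a finite combination of the powers `w_n^k`,
so the series is a finite sum of geometric series with `|w_n| = |z| < 1`. Summing them produces
the factor `w_n / (1 - w_n)`, and `(1 - z) (zζ;ζ)_n / (1 - ζ^n z) = (z;ζ)_n` turns the result
into the finite formula for `g₃(z, ζ)`.
-/

/-- The finite q-Pochhammer symbol `(z;q)_n = ∏_{i=0}^{n-1} (1 - z q^i)`. -/
noncomputable def qPoch (z q : ℂ) (n : ℕ) : ℂ := ∏ i ∈ Finset.range n, (1 - z * q ^ i)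

open Finset

lemma qPoch_succ (z q : ℂ) (n : ℕ) :
    qPoch z q (n + 1) = qPoch z q n * (1 - z * q ^ n) :=
  prod_range_succ _ n

lemma qPoch_succ' (z q : ℂ) (n : ℕ) :
    qPoch z q (n + 1) = (1 - z) * qPoch (z * q) q n := by
  simp only [qPoch, prod_range_succ', pow_zero, mul_one, pow_succ', mul_assoc, mul_comm q]
  ring

lemma one_sub_mul_qPoch_mul_div (z q : ℂ) (n : ℕ) (h : 1 - q ^ n * z ≠ 0) :
    (1 - z) * qPoch (z * q) q n / (1 - q ^ n * z) = qPoch z q n := by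
  rw [div_eq_iff h, ← qPoch_succ', qPoch_succ, mul_comm z]

lemma norm_exp_two_pi_I_div (m : ℕ) : ‖Complex.exp (2 * Real.pi * Complex.I / m)‖ = 1 := by
  rw [show 2 * Real.pi * Complex.I / m = ((2 * Real.pi / m : ℝ) : ℂ) * Complex.I by
    push_cast; ring]
  exact Complex.norm_exp_ofReal_mul_I _

lemma pow_mul_succ_mul_pow_mul_inv_pow {K : Type*} [Field K] {ζ : K} (hζ : ζ ≠ 0)
    (z : K) (k n : ℕ) :
    ζ ^ (k * (n + 1)) * z ^ k * ζ⁻¹ ^ k = (ζ ^ n * z) ^ k := by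
  rw [mul_comm k, pow_mul, ← mul_pow, ← mul_pow, pow_succ]
  congr 1
  field_simp

lemma hasSum_sum_mul_pow_succ {K ι : Type*} [NormedField K] (s : Finset ι) (c w : ι → K)
    (hw : ∀ i ∈ s, ‖w i‖ < 1) :
    HasSum (fun k : ℕ => ∑ i ∈ s, c i * w i ^ (k + 1)) (∑ i ∈ s, c i * w i / (1 - w i)) := by
  refine hasSum_sum fun i hi => ?_
  simpa only [pow_succ', ← mul_assoc, div_eq_mul_inv]
    using (hasSum_geometric_of_norm_lt_one (hw i hi)).mul_left (c i * w i)

theorem g3_eq_sum_strongU_at_root_of_unity_general (m : ℕ)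
    (ζ : ℂ) (hζ : ζ = Complex.exp (2 * Real.pi * Complex.I / m))
    (z : ℂ) (hz0 : 0 < ‖z‖) (hz1 : ‖z‖ < 1)
    (G : ℂ)
    (hG : G = (1 - z ^ m - z⁻¹ ^ m)⁻¹ *
      ∑ n ∈ Finset.range m, ζ ^ n * qPoch z ζ n * qPoch (z⁻¹ * ζ) ζ n)
    (V : ℕ → ℂ)
    (hV : ∀ k : ℕ, V k = -(1 - z ^ m - z⁻¹ ^ m)⁻¹ *
      ∑ n ∈ Finset.range m, ζ ^ (k * (n + 1)) * qPoch (z * ζ) ζ n * qPoch (z⁻¹ * ζ) ζ n) :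
    Summable (fun k : ℕ => V (k + 1) * z ^ (k + 1) * ζ⁻¹ ^ (k + 1)) ∧
    G = ((z - 1) / z) * ∑' k : ℕ, V (k + 1) * z ^ (k + 1) * ζ⁻¹ ^ (k + 1) := by
  have hζ1 : ‖ζ‖ = 1 := hζ ▸ norm_exp_two_pi_I_div m
  have hζ0 : ζ ≠ 0 := norm_ne_zero_iff.mp (by simp [hζ1])
  have hz : z ≠ 0 := norm_pos_iff.mp hz0
  have hw : ∀ n, ‖ζ ^ n * z‖ < 1 := fun n => by simpa [hζ1] using hz1
  set C := (1 - z ^ m - z⁻¹ ^ m)⁻¹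
  have hterm : (fun k : ℕ => V (k + 1) * z ^ (k + 1) * ζ⁻¹ ^ (k + 1)) = fun k =>
      ∑ n ∈ range m, -C * qPoch (z * ζ) ζ n * qPoch (z⁻¹ * ζ) ζ n * (ζ ^ n * z) ^ (k + 1) := by
    ext k
    rw [hV, mul_sum, sum_mul, sum_mul]
    refine sum_congr rfl fun n _ => ?_
    rw [← pow_mul_succ_mul_pow_mul_inv_pow hζ0]
    ring
  have hsum := hasSum_sum_mul_pow_succ (range m)
    (fun n => -C * qPoch (z * ζ) ζ n * qPoch (z⁻¹ * ζ) ζ n) (fun n => ζ ^ n * z) fun n _ => hw n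
  rw [hterm]
  refine ⟨hsum.summable, ?_⟩
  rw [hsum.tsum_eq, hG, mul_sum, mul_sum]
  refine sum_congr rfl fun n _ => ?_
  have hw1 : 1 - ζ ^ n * z ≠ 0 := sub_ne_zero.mpr fun h => by simpa [← h] using hw n
  rw [← one_sub_mul_qPoch_mul_div z ζ n hw1]
  field_simp
  ring

/-- Corollary 2.7: Let `ζ_m = e^{2πi/m}`, `0 < |z| < 1`,
`z^m + z^{-m} ≠ 1`.  With
`G(z) = (1 − z^m − z^{-m})⁻¹ ∑_{n=0}^{m-1} ζ_m^n (z;ζ_m)_n (z⁻¹ζ_m;ζ_m)_n` (the value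
of `g₃(z,ζ_m)`) and
`V_k(z) = −(1 − z^m − z^{-m})⁻¹ ∑_{n=0}^{m-1} ζ_m^{k(n+1)} (zζ_m;ζ_m)_n (z⁻¹ζ_m;ζ_m)_n`
(the value of `U_k(−z,ζ_m)`), the series `∑_{k=1}^∞ V_k(z) z^k ζ_m^{-k}` converges and
`G(z) = ((z−1)/z) ∑_{k=1}^∞ V_k(z) z^k ζ_m^{-k}`. -/
theorem g3_eq_sum_strongU_at_root_of_unity (m : ℕ) (hm : 0 < m)
    (ζ : ℂ) (hζ : ζ = Complex.exp (2 * Real.pi * Complex.I / m))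
    (z : ℂ) (hz0 : 0 < ‖z‖) (hz1 : ‖z‖ < 1)
    (hzm : z ^ m + z⁻¹ ^ m ≠ 1)
    (G : ℂ)
    (hG : G = (1 - z ^ m - z⁻¹ ^ m)⁻¹ *
      ∑ n ∈ Finset.range m, ζ ^ n * qPoch z ζ n * qPoch (z⁻¹ * ζ) ζ n)
    (V : ℕ → ℂ)
    (hV : ∀ k : ℕ, V k = -(1 - z ^ m - z⁻¹ ^ m)⁻¹ *
      ∑ n ∈ Finset.range m, ζ ^ (k * (n + 1)) * qPoch (z * ζ) ζ n * qPoch (z⁻¹ * ζ) ζ n) :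
    Summable (fun k : ℕ => V (k + 1) * z ^ (k + 1) * ζ⁻¹ ^ (k + 1)) ∧
    G = ((z - 1) / z) * ∑' k : ℕ, V (k + 1) * z ^ (k + 1) * ζ⁻¹ ^ (k + 1) :=
  g3_eq_sum_strongU_at_root_of_unity_general m ζ hζ z hz0 hz1 G hG V hV
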